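/- Let μ > 0, T, γ ∈ ℝ and a < b. Let φ : ℝ × [a,b] → ℝ be of class C², satisfying the damped wave equation μ ∂_{tt}φ − T ∂_{xx}φ + γ ∂_tφ = 0, with fixed ends in the sense that ∂_tφ(t,a) = ∂_tφ(t,b) = 0 for all t. Let s¹ : ℝ × [a,b] → ℝ be of class C¹ with ∂_t s¹ = (μ/2)(∂_tφ)² − (T/2)(∂_xφ)² − (γ/μ)s¹ and s¹(0,x) = 0 for all x ∈ [a,b]. Then the total energy E(t) := ∫_a^b [ (μ/2)(∂_tφ(t,x))² + (T/2)(∂_xφ(t,x))² + (γ/μ)s¹(t,x) ] dx satisfies, for all t, E(t) = e^{−(γ/μ)t} ∫_a^b [ (μ/2)(∂_tφ(0,x))² + (T/2)(∂_xφ(0,x))² ] dx; i.e. the total energy decreases exponentially in time. -/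

import Mathlib

/-!
Multiply the energy density by `exp ((γ / μ) t)`. By the damped wave equation and the
equation for `s¹`, the time derivative of this weighted density is the exact `x`-derivative
`exp ((γ / μ) t) T ∂ₓ(∂ₜφ ∂ₓφ)`, whose integral over `[a, b]` vanishes because the ends are
fixed. So `exp ((γ / μ) t) E(t)` is constant, and at `t = 0` it is the initial energy since
`s¹(0, ·) = 0`.
-/

/-- Partial derivative `∂_t g` of a function on the `(t,x)` plane. -/
noncomputable def ptd (g : ℝ × ℝ → ℝ) (p : ℝ × ℝ) : ℝ :=
  deriv (fun τ => g (τ, p.2)) p.1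

/-- Partial derivative `∂_x g` of a function on the `(t,x)` plane. -/
noncomputable def pxd (g : ℝ × ℝ → ℝ) (p : ℝ × ℝ) : ℝ :=
  deriv (fun y => g (p.1, y)) p.2

section PartialDerivatives

variable {g : ℝ × ℝ → ℝ}

theorem hasDerivAt_ptd {t x : ℝ} (hg : DifferentiableAt ℝ g (t, x)) :
    HasDerivAt (fun τ => g (τ, x)) (ptd g (t, x)) t :=
  (hg.comp t (differentiableAt_id.prodMk (differentiableAt_const x))).hasDerivAt

theorem hasDerivAt_pxd {t x : ℝ} (hg : DifferentiableAt ℝ g (t, x)) :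
    HasDerivAt (fun y => g (t, y)) (pxd g (t, x)) x :=
  (hg.comp x ((differentiableAt_const t).prodMk differentiableAt_id)).hasDerivAt

theorem ptd_eq_fderiv {p : ℝ × ℝ} (hg : DifferentiableAt ℝ g p) :
    ptd g p = fderiv ℝ g p (1, 0) :=
  (hasDerivAt_ptd hg).unique
    (hg.hasFDerivAt.comp_hasDerivAt p.1 ((hasDerivAt_id p.1).prodMk (hasDerivAt_const p.1 p.2)))

theorem pxd_eq_fderiv {p : ℝ × ℝ} (hg : DifferentiableAt ℝ g p) :
    pxd g p = fderiv ℝ g p (0, 1) :=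
  (hasDerivAt_pxd hg).unique
    (hg.hasFDerivAt.comp_hasDerivAt p.2 ((hasDerivAt_const p.2 p.1).prodMk (hasDerivAt_id p.2)))

variable {m n : WithTop ℕ∞}

theorem ContDiff.ptd (hg : ContDiff ℝ n g) (hmn : m + 1 ≤ n) : ContDiff ℝ m (ptd g) := by
  have hd : Differentiable ℝ g :=
    (hg.of_le (le_trans le_add_self hmn)).differentiable one_ne_zero
  rw [show _root_.ptd g = fun p => fderiv ℝ g p (1, 0) from funext fun p => ptd_eq_fderiv (hd p)]
  exact (hg.fderiv_right hmn).clm_apply contDiff_const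

theorem ContDiff.pxd (hg : ContDiff ℝ n g) (hmn : m + 1 ≤ n) : ContDiff ℝ m (pxd g) := by
  have hd : Differentiable ℝ g :=
    (hg.of_le (le_trans le_add_self hmn)).differentiable one_ne_zero
  rw [show _root_.pxd g = fun p => fderiv ℝ g p (0, 1) from funext fun p => pxd_eq_fderiv (hd p)]
  exact (hg.fderiv_right hmn).clm_apply contDiff_const

theorem ptd_pxd_comm (hg : ContDiff ℝ 2 g) : ptd (pxd g) = pxd (ptd g) := by
  funext p
  have hd : Differentiable ℝ g := hg.differentiable two_ne_zero
  have hdd : Differentiable ℝ (fderiv ℝ g) := (hg.fderiv_right le_rfl).differentiable one_ne_zero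
  rw [ptd_eq_fderiv (((hg.pxd le_rfl).differentiable one_ne_zero) p),
    pxd_eq_fderiv (((hg.ptd le_rfl).differentiable one_ne_zero) p),
    show pxd g = fun q => fderiv ℝ g q (0, 1) from funext fun q => pxd_eq_fderiv (hd q),
    show ptd g = fun q => fderiv ℝ g q (1, 0) from funext fun q => ptd_eq_fderiv (hd q),
    fderiv_clm_apply (hdd p) (differentiableAt_const _),
    fderiv_clm_apply (hdd p) (differentiableAt_const _)]
  simpa using hg.contDiffAt.isSymmSndFDerivAt (by simp) (1, 0) (0, 1)

theorem ContDiff.differentiable_ptd (hg : ContDiff ℝ 2 g) : Differentiable ℝ (_root_.ptd g) :=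
  (hg.ptd (m := 1) (by norm_num)).differentiable one_ne_zero

theorem ContDiff.differentiable_pxd (hg : ContDiff ℝ 2 g) : Differentiable ℝ (_root_.pxd g) :=
  (hg.pxd (m := 1) (by norm_num)).differentiable one_ne_zero

end PartialDerivatives

theorem hasDerivAt_intervalIntegral_of_contDiff {F : ℝ × ℝ → ℝ} (hF : ContDiff ℝ 1 F)
    (a b t : ℝ) :
    HasDerivAt (fun τ => ∫ x in a..b, F (τ, x)) (∫ x in a..b, ptd F (t, x)) t := by
  have hF' : Continuous (ptd F) := (hF.ptd (m := 0) (by simp)).continuous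
  obtain ⟨M, hM⟩ := ((isCompact_closedBall t 1).prod (isCompact_uIcc (a := a) (b := b)))
    |>.exists_bound_of_continuousOn hF'.continuousOn
  refine (intervalIntegral.hasDerivAt_integral_of_dominated_loc_of_deriv_le
    (F := fun τ x => F (τ, x)) (F' := fun τ x => ptd F (τ, x)) (μ := MeasureTheory.volume)
    (bound := fun _ => M) (Metric.ball_mem_nhds t one_pos) ?_ ?_ ?_ ?_
    intervalIntegrable_const ?_).2
  · exact .of_forall fun τ => (hF.continuous.comp (.prodMk_right τ)).aestronglyMeasurable
  · exact (hF.continuous.comp (.prodMk_right t)).intervalIntegrable a b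
  · exact (hF'.comp (.prodMk_right t)).aestronglyMeasurable
  · exact .of_forall fun x hx τ hτ =>
      hM (τ, x) ⟨Metric.ball_subset_closedBall hτ, Set.uIoc_subset_uIcc hx⟩
  · exact .of_forall fun x _ τ _ => hasDerivAt_ptd ((hF.differentiable one_ne_zero) _)

noncomputable def stringEnergyDensity (μ T κ : ℝ) (φ s : ℝ × ℝ → ℝ) (p : ℝ × ℝ) : ℝ :=
  μ / 2 * ptd φ p ^ 2 + T / 2 * pxd φ p ^ 2 + κ * s p

section DampedString

variable {μ T γ : ℝ} {φ s : ℝ × ℝ → ℝ}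

theorem contDiff_exp_mul_stringEnergyDensity (hφ : ContDiff ℝ 2 φ) (hs : ContDiff ℝ 1 s)
    (κ : ℝ) :
    ContDiff ℝ 1 fun p : ℝ × ℝ => Real.exp (κ * p.1) * stringEnergyDensity μ T κ φ s p := by
  have hφt : ContDiff ℝ 1 (ptd φ) := hφ.ptd (by norm_num)
  have hφx : ContDiff ℝ 1 (pxd φ) := hφ.pxd (by norm_num)
  unfold stringEnergyDensity
  fun_prop

theorem hasDerivAt_exp_mul_stringEnergyDensity (hμ : μ ≠ 0) (hφ : ContDiff ℝ 2 φ)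
    (hs : Differentiable ℝ s) {t x : ℝ}
    (hwave : μ * ptd (ptd φ) (t, x) - T * pxd (pxd φ) (t, x) + γ * ptd φ (t, x) = 0)
    (hseq : ptd s (t, x) = μ / 2 * ptd φ (t, x) ^ 2 - T / 2 * pxd φ (t, x) ^ 2
      - γ / μ * s (t, x)) :
    HasDerivAt (fun τ => Real.exp (γ / μ * τ) * stringEnergyDensity μ T (γ / μ) φ s (τ, x))
      (Real.exp (γ / μ * t) * T *
        (pxd (ptd φ) (t, x) * pxd φ (t, x) + ptd φ (t, x) * pxd (pxd φ) (t, x))) t := by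
  have hφt := hasDerivAt_ptd (hφ.differentiable_ptd (t, x))
  have hφx := hasDerivAt_ptd (hφ.differentiable_pxd (t, x))
  have hexp :
      HasDerivAt (fun τ => Real.exp (γ / μ * τ)) (Real.exp (γ / μ * t) * (γ / μ)) t := by
    simpa using ((hasDerivAt_id t).const_mul (γ / μ)).exp
  refine (hexp.mul ((((hφt.pow 2).const_mul (μ / 2)).add ((hφx.pow 2).const_mul (T / 2))).add
    ((hasDerivAt_ptd (hs (t, x))).const_mul (γ / μ)))).congr_deriv ?_
  have hφtt : ptd (ptd φ) (t, x) = (T * pxd (pxd φ) (t, x) - γ * ptd φ (t, x)) / μ := by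
    field_simp
    linarith
  rw [hseq, ptd_pxd_comm hφ, hφtt]
  simp only [Pi.add_apply, Pi.pow_apply]
  field_simp
  ring

theorem hasDerivAt_integral_exp_mul_stringEnergyDensity {a b : ℝ} (hab : a ≤ b)
    (hμ : μ ≠ 0) (hφ : ContDiff ℝ 2 φ) (hs : ContDiff ℝ 1 s)
    (hwave : ∀ t, ∀ x ∈ Set.Icc a b,
      μ * ptd (ptd φ) (t, x) - T * pxd (pxd φ) (t, x) + γ * ptd φ (t, x) = 0)
    (hends : ∀ t, ptd φ (t, a) = 0 ∧ ptd φ (t, b) = 0)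
    (hseq : ∀ t, ∀ x ∈ Set.Icc a b,
      ptd s (t, x) = μ / 2 * ptd φ (t, x) ^ 2 - T / 2 * pxd φ (t, x) ^ 2 - γ / μ * s (t, x))
    (t : ℝ) :
    HasDerivAt (fun τ => ∫ x in a..b,
      Real.exp (γ / μ * τ) * stringEnergyDensity μ T (γ / μ) φ s (τ, x)) 0 t := by
  set W : ℝ × ℝ → ℝ :=
    fun p => Real.exp (γ / μ * p.1) * stringEnergyDensity μ T (γ / μ) φ s p
  have hW : ContDiff ℝ 1 W := contDiff_exp_mul_stringEnergyDensity hφ hs _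
  have hflux : ∀ y ∈ Set.uIcc a b, HasDerivAt
      (fun y => Real.exp (γ / μ * t) * T * (ptd φ (t, y) * pxd φ (t, y))) (ptd W (t, y)) y := by
    intro y hy
    rw [Set.uIcc_of_le hab] at hy
    rw [show ptd W (t, y) = _ from (hasDerivAt_exp_mul_stringEnergyDensity hμ hφ
      (hs.differentiable one_ne_zero) (hwave t y hy) (hseq t y hy)).deriv]
    exact ((hasDerivAt_pxd (hφ.differentiable_ptd (t, y))).mul
      (hasDerivAt_pxd (hφ.differentiable_pxd (t, y)))).const_mul _
  have hbalance : ∫ x in a..b, ptd W (t, x) = 0 := by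
    rw [intervalIntegral.integral_eq_sub_of_hasDerivAt hflux
      (((hW.ptd (m := 0) (by simp)).continuous.comp (.prodMk_right t)).intervalIntegrable a b)]
    simp [(hends t).1, (hends t).2]
  exact hbalance ▸ hasDerivAt_intervalIntegral_of_contDiff hW a b t

end DampedString

/-- **Exponential decay of the total energy of a damped vibrating string with fixed
ends.** If `μ ∂_{tt}φ − T ∂_{xx}φ + γ ∂_tφ = 0` on `ℝ × [a,b]`, the ends are fixed
(`∂_tφ(t,a) = ∂_tφ(t,b) = 0`), and `∂_t s¹ = (μ/2)(∂_tφ)² − (T/2)(∂_xφ)² − (γ/μ)s¹` with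
`s¹(0,·) = 0`, then the total energy
`E(t) = ∫_a^b [(μ/2)(∂_tφ)² + (T/2)(∂_xφ)² + (γ/μ)s¹] dx` satisfies
`E(t) = e^{−(γ/μ)t} ∫_a^b [(μ/2)(∂_tφ(0,x))² + (T/2)(∂_xφ(0,x))²] dx`. -/
theorem vibrating_string_total_energy_decay
    (μ T γ a b : ℝ) (hμ : 0 < μ) (hab : a < b)
    (φ : ℝ × ℝ → ℝ) (hφ : ContDiff ℝ 2 φ)
    (hwave : ∀ (t : ℝ), ∀ x ∈ Set.Icc a b,
      μ * ptd (ptd φ) (t, x) - T * pxd (pxd φ) (t, x) + γ * ptd φ (t, x) = 0)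
    (hends : ∀ t : ℝ, ptd φ (t, a) = 0 ∧ ptd φ (t, b) = 0)
    (s1 : ℝ × ℝ → ℝ) (hs1 : ContDiff ℝ 1 s1)
    (hs1eq : ∀ (t : ℝ), ∀ x ∈ Set.Icc a b,
      ptd s1 (t, x) = μ / 2 * (ptd φ (t, x)) ^ 2 - T / 2 * (pxd φ (t, x)) ^ 2
        - γ / μ * s1 (t, x))
    (hs10 : ∀ x ∈ Set.Icc a b, s1 (0, x) = 0) :
    ∀ t : ℝ,
      (∫ x in a..b, (μ / 2 * (ptd φ (t, x)) ^ 2 + T / 2 * (pxd φ (t, x)) ^ 2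
          + γ / μ * s1 (t, x)))
        = Real.exp (-(γ / μ) * t)
          * ∫ x in a..b, (μ / 2 * (ptd φ (0, x)) ^ 2 + T / 2 * (pxd φ (0, x)) ^ 2) := by
  intro t
  have hH :=
    hasDerivAt_integral_exp_mul_stringEnergyDensity hab.le hμ.ne' hφ hs1 hwave hends hs1eq
  have hconst := is_const_of_deriv_eq_zero (fun u => (hH u).differentiableAt)
    (fun u => (hH u).deriv) t 0
  have hinit : ∫ x in a..b, Real.exp (γ / μ * 0) * stringEnergyDensity μ T (γ / μ) φ s1 (0, x)
      = ∫ x in a..b, (μ / 2 * ptd φ (0, x) ^ 2 + T / 2 * pxd φ (0, x) ^ 2) :=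
    intervalIntegral.integral_congr fun x hx => by
      rw [Set.uIcc_of_le hab.le] at hx
      simp [stringEnergyDensity, hs10 x hx]
  rw [← hinit, ← hconst, intervalIntegral.integral_const_mul, ← mul_assoc, ← Real.exp_add,
    neg_mul, neg_add_cancel, Real.exp_zero, one_mul]
  rfl
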